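/- arXiv:1702.06388 — 2 statements merged into one kernel-verified Lean document; each statement's English description precedes it below -/
import Mathlib

section
/- If A is an ancestor of finite height of a normal vertex B of a quiver (i.e. A ≤ B, h(A) < ∞, and B is normal), then both A and B are phylogenetic. -/
universe u
variable {V : Type u} [Quiver V]

/-- An evolution of length `m` with vertex sequence `A 0, A 1, ..., A m`:
for each `k < m` there is an edge from `A (k+1)` to `A k`
(the paper's evolution `A 0 ← A 1 ← ⋯ ← A m`). -/
def IsEvol (A : ℕ → V) (m : ℕ) : Prop := ∀ k < m, Nonempty (A (k + 1) ⟶ A k)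

/-- `Anc X Y` : `X` is an ancestor of `Y`, i.e. there is an evolution from `X` to `Y`. -/
def Anc (X Y : V) : Prop := ∃ (m : ℕ) (A : ℕ → V), IsEvol A m ∧ A 0 = X ∧ A m = Y

/-- `X` and `Y` are isotypic. -/
def Isotypic (X Y : V) : Prop := Anc X Y ∧ Anc Y X

/-- A vertex is primitive if every ancestor of it is isotypic to it. -/
def Primitive (X : V) : Prop := ∀ B : V, Anc B X → Anc X B

/-- A full evolution for `X` : an evolution from a primitive vertex to `X`. -/
def IsFullEvol (A : ℕ → V) (m : ℕ) (X : V) : Prop :=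
  IsEvol A m ∧ Primitive (A 0) ∧ A m = X

/-- The height of a vertex: the least length of a full evolution for it (`⊤` if none). -/
noncomputable def height (X : V) : ℕ∞ :=
  sInf {n : ℕ∞ | ∃ m : ℕ, n = (m : ℕ∞) ∧ ∃ A : ℕ → V, IsFullEvol A m X}

/-- `A` is a critical ancestor of `B`. -/
def CritAnc (A B : V) : Prop :=
  height A < ⊤ ∧ ∃ (m : ℕ) (E : ℕ → V), 0 < m ∧ IsEvol E m ∧ E 0 = A ∧ E m = B ∧
    height (E 1) = height A + 1

/-- A vertex is normal if any two of its critical ancestors of equal height are isotypic. -/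
def NormalVtx (B : V) : Prop :=
  ∀ A A' : V, CritAnc A B → CritAnc A' B → height A = height A' → Isotypic A A'

/-- The evolution `(A, m)` embeds in the evolution `(B, n)`. -/
def Embeds (A : ℕ → V) (m : ℕ) (B : ℕ → V) (n : ℕ) : Prop :=
  m ≤ n ∧ ∃ r : ℕ → ℕ, (∀ k < m, r k < r (k + 1)) ∧ r m ≤ n ∧
    ∀ k ≤ m, Isotypic (A k) (B (r k))

/-- A universal evolution for `X`: a full evolution for `X` embedding in every
full evolution for `X`. -/
def IsUniversalEvol (A : ℕ → V) (m : ℕ) (X : V) : Prop :=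
  IsFullEvol A m X ∧ ∀ (B : ℕ → V) (n : ℕ), IsFullEvol B n X → Embeds A m B n

/-- A vertex is phylogenetic if it admits a universal evolution. -/
def Phylogenetic (X : V) : Prop := ∃ (A : ℕ → V) (m : ℕ), IsUniversalEvol A m X

/-- A quiver is monotonous if `h(A) ≥ h(B)` for every edge `A → B`. -/
def Monotonous (V : Type u) [Quiver V] : Prop :=
  ∀ A B : V, Nonempty (A ⟶ B) → height B ≤ height A

/-- A vertex `A` is regular if for every descendant `B` of `A` with `h(B) = h(A)`
there is an edge `B → A`. -/
def Regular (A : V) : Prop :=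
  ∀ B : V, Anc A B → height B = height A → Nonempty (B ⟶ A)

/-- The clade of a vertex `A`: the full subquiver of descendants of `A`. -/
abbrev Clade (A : V) : Type u := {B : V // Anc A B}

instance (A : V) : Quiver (Clade A) := ⟨fun X Y => X.val ⟶ Y.val⟩

/-!
Fix a short full evolution `C 0 ← ⋯ ← C n = X`, so that `h(C k) = k`. Along any other full
evolution `D 0 ← ⋯ ← D m = X` the height starts at `0`, ends at `n` and grows by at most one per
step, so the last vertex `D j` of height `≤ k` has height exactly `k` and its successor has
height `k + 1`. Both `C k` and `D j` are then critical ancestors of `X` of height `k`, hence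
isotypic when `X` is normal, and these indices `j` embed `C` into `D`. Normality passes from a
vertex to its ancestors, since a critical ancestor of `A` is one of every descendant of `A`.
-/

lemma anc_refl (X : V) : Anc X X :=
  ⟨0, fun _ => X, fun _ hk => absurd hk (Nat.not_lt_zero _), rfl, rfl⟩

lemma isotypic_refl (X : V) : Isotypic X X := ⟨anc_refl X, anc_refl X⟩

namespace IsEvol

variable {A B : ℕ → V} {m n : ℕ}

lemma drop (h : IsEvol A m) (i : ℕ) : IsEvol (fun t => A (t + i)) (m - i) := fun k hk => by
  simpa only [Nat.add_right_comm k 1 i] using h (k + i) (by omega)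

lemma append (hA : IsEvol A m) (hB : IsEvol B n) (hAB : A m = B 0) :
    ∃ C : ℕ → V, IsEvol C (m + n) ∧ (∀ j ≤ m, C j = A j) ∧ C (m + n) = B n := by
  refine ⟨fun j => if j ≤ m then A j else B (j - m), fun k hk => ?_, fun j hj => if_pos hj, ?_⟩
  · rcases lt_trichotomy k m with hkm | rfl | hkm
    · simpa only [if_pos (Nat.succ_le_of_lt hkm), if_pos hkm.le] using hA k hkm
    · simpa only [if_pos le_rfl, if_neg (Nat.lt_irrefl k ∘ Nat.lt_of_succ_le),
        Nat.add_sub_cancel_left, hAB] using hB 0 (by omega)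
    · simpa only [if_neg (by omega : ¬k + 1 ≤ m), if_neg hkm.not_ge,
        Nat.sub_add_comm hkm.le] using hB (k - m) (by omega)
  · rcases Nat.eq_zero_or_pos n with rfl | hn
    · simp [hAB]
    · simp only [if_neg (by omega : ¬m + n ≤ m), Nat.add_sub_cancel_left]

end IsEvol

lemma IsFullEvol.prefix {A : ℕ → V} {m j : ℕ} {X : V} (h : IsFullEvol A m X) (hj : j ≤ m) :
    IsFullEvol A j (A j) :=
  ⟨fun k hk => h.1 k (hk.trans_le hj), h.2.1, rfl⟩

lemma height_le_of_isFullEvol {A : ℕ → V} {m : ℕ} {X : V} (h : IsFullEvol A m X) :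
    height X ≤ m :=
  sInf_le ⟨m, rfl, A, h⟩

lemma IsFullEvol.height_le_index {A : ℕ → V} {m j : ℕ} {X : V} (h : IsFullEvol A m X)
    (hj : j ≤ m) : height (A j) ≤ j :=
  height_le_of_isFullEvol (h.prefix hj)

lemma exists_isFullEvol_height_eq {X : V} (h : height X < ⊤) :
    ∃ (m : ℕ) (A : ℕ → V), IsFullEvol A m X ∧ height X = m := by
  set S := {n : ℕ∞ | ∃ m : ℕ, n = m ∧ ∃ A : ℕ → V, IsFullEvol A m X}
  have hS : S.Nonempty := Set.nonempty_iff_ne_empty.2 fun hS =>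
    h.ne (show sInf S = ⊤ by rw [hS, sInf_empty])
  obtain ⟨m, hm, A, hA⟩ := csInf_mem hS
  exact ⟨m, A, hA, hm⟩

lemma IsEvol.height_le_add {E : ℕ → V} {ℓ : ℕ} (hE : IsEvol E ℓ) :
    height (E ℓ) ≤ height (E 0) + ℓ := by
  rcases eq_top_or_lt_top (height (E 0)) with h | h
  · simp [h]
  obtain ⟨m, A, hA, hm⟩ := exists_isFullEvol_height_eq h
  obtain ⟨C, hC, hCA, hCE⟩ := hA.1.append hE hA.2.2
  rw [hm, ← Nat.cast_add]
  exact height_le_of_isFullEvol ⟨hC, hCA 0 (Nat.zero_le m) ▸ hA.2.1, hCE⟩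

lemma IsEvol.height_succ_le {E : ℕ → V} {m k : ℕ} (hE : IsEvol E m) (hk : k < m) :
    height (E (k + 1)) ≤ height (E k) + 1 := by
  have hstep : IsEvol (fun t => E (t + k)) 1 := fun t ht => by
    obtain rfl := Nat.lt_one_iff.1 ht
    simpa only [zero_add, Nat.add_comm 1 k] using hE k hk
  simpa only [zero_add, Nat.add_comm 1 k, Nat.cast_one] using hstep.height_le_add

lemma height_lt_top_of_anc {A B : V} (hAB : Anc A B) (hA : height A < ⊤) : height B < ⊤ := by
  obtain ⟨ℓ, E, hE, rfl, rfl⟩ := hAB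
  exact hE.height_le_add.trans_lt (ENat.add_lt_top.2 ⟨hA, ENat.natCast_lt_top ℓ⟩)

lemma IsFullEvol.height_eq_index {C : ℕ → V} {n k : ℕ} {X : V} (hC : IsFullEvol C n X)
    (hn : height X = n) (hk : k ≤ n) : height (C k) = k := by
  have hle := hC.height_le_index hk
  have htail := (hC.1.drop k).height_le_add
  simp only [zero_add, Nat.sub_add_cancel hk, hC.2.2, hn] at htail
  lift height (C k) to ℕ using (hle.trans_lt (ENat.natCast_lt_top k)).ne with h
  norm_cast at hle htail ⊢
  omega

lemma IsEvol.critAnc {D : ℕ → V} {m j : ℕ} (hD : IsEvol D m) (hj : j < m)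
    (hfin : height (D j) < ⊤) (hstep : height (D (j + 1)) = height (D j) + 1) :
    CritAnc (D j) (D m) :=
  ⟨hfin, m - j, fun t => D (t + j), by omega, hD.drop j, by simp,
    by simp [Nat.sub_add_cancel hj.le], by simpa only [Nat.add_comm 1 j] using hstep⟩

lemma CritAnc.trans_anc {X A B : V} (hXA : CritAnc X A) (hAB : Anc A B) : CritAnc X B := by
  obtain ⟨hfin, ℓ, E, hℓ, hE, hE0, hEℓ, hE1⟩ := hXA
  obtain ⟨p, F, hF, hF0, hFp⟩ := hAB
  obtain ⟨G, hG, hGE, hGF⟩ := hE.append hF (hEℓ.trans hF0.symm)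
  exact ⟨hfin, ℓ + p, G, by omega, hG, (hGE 0 (Nat.zero_le ℓ)).trans hE0, hGF.trans hFp,
    hGE 1 hℓ ▸ hE1⟩

lemma NormalVtx.of_anc {A B : V} (hB : NormalVtx B) (hAB : Anc A B) : NormalVtx A :=
  fun X X' hX hX' h => hB X X' (hX.trans_anc hAB) (hX'.trans_anc hAB) h

section LastIndex

open Classical in
noncomputable def lastIndexOfHeightLE (D : ℕ → V) (m k : ℕ) : ℕ :=
  Nat.findGreatest (fun j => height (D j) ≤ k) m

variable {D : ℕ → V} {m k : ℕ} {X : V}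

lemma lastIndexOfHeightLE_le (D : ℕ → V) (m k : ℕ) : lastIndexOfHeightLE D m k ≤ m :=
  Nat.findGreatest_le m

lemma IsFullEvol.height_lastIndexOfHeightLE_le (hD : IsFullEvol D m X) :
    height (D (lastIndexOfHeightLE D m k)) ≤ k :=
  Nat.findGreatest_spec (P := fun j => height (D j) ≤ k) (Nat.zero_le m)
    ((hD.height_le_index (Nat.zero_le m)).trans (by simp))

lemma IsFullEvol.lastIndexOfHeightLE_lt (hD : IsFullEvol D m X) (hk : (k : ℕ∞) < height X) :
    lastIndexOfHeightLE D m k < m := by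
  refine (lastIndexOfHeightLE_le D m k).lt_of_ne fun hm => hk.not_ge ?_
  have hle := hD.height_lastIndexOfHeightLE_le (k := k)
  rwa [hm, hD.2.2] at hle

lemma IsFullEvol.height_lastIndexOfHeightLE_succ (hD : IsFullEvol D m X)
    (hk : (k : ℕ∞) < height X) : height (D (lastIndexOfHeightLE D m k + 1)) = k + 1 := by
  have hlt := hD.lastIndexOfHeightLE_lt hk
  have hnext : ¬height (D (lastIndexOfHeightLE D m k + 1)) ≤ k :=
    Nat.findGreatest_is_greatest (P := fun j => height (D j) ≤ k) (Nat.lt_succ_self _) hlt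
  refine le_antisymm ?_ (ENat.natCast_add_one_le_iff.2 (not_le.1 hnext))
  exact (hD.1.height_succ_le hlt).trans (add_le_add_left hD.height_lastIndexOfHeightLE_le 1)

lemma IsFullEvol.height_lastIndexOfHeightLE (hD : IsFullEvol D m X)
    (hk : (k : ℕ∞) < height X) : height (D (lastIndexOfHeightLE D m k)) = k := by
  refine le_antisymm hD.height_lastIndexOfHeightLE_le ?_
  have hstep := hD.1.height_succ_le (hD.lastIndexOfHeightLE_lt hk)
  rwa [hD.height_lastIndexOfHeightLE_succ hk, ENat.add_le_add_iff_right ENat.one_ne_top] at hstep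

lemma IsFullEvol.lastIndexOfHeightLE_lt_succ (hD : IsFullEvol D m X)
    (hk : (k : ℕ∞) < height X) : lastIndexOfHeightLE D m k < lastIndexOfHeightLE D m (k + 1) :=
  Nat.le_findGreatest (P := fun j => height (D j) ≤ (k + 1 : ℕ)) (hD.lastIndexOfHeightLE_lt hk)
    (by rw [hD.height_lastIndexOfHeightLE_succ hk, Nat.cast_succ])

lemma IsFullEvol.lastIndexOfHeightLE_eq_of_height_eq (hD : IsFullEvol D m X) {n : ℕ}
    (hn : height X = n) : lastIndexOfHeightLE D m n = m :=
  Nat.findGreatest_eq (P := fun j => height (D j) ≤ n) (by rw [hD.2.2, hn])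

end LastIndex

lemma NormalVtx.embeds {X : V} (hX : NormalVtx X) {C : ℕ → V} {n : ℕ} (hC : IsFullEvol C n X)
    (hn : height X = n) {D : ℕ → V} {m : ℕ} (hD : IsFullEvol D m X) : Embeds C n D m := by
  have hnm : n ≤ m := by exact_mod_cast hn ▸ height_le_of_isFullEvol hD
  have hkn {k : ℕ} (hk : k < n) : (k : ℕ∞) < height X := hn ▸ Nat.cast_lt.2 hk
  refine ⟨hnm, lastIndexOfHeightLE D m, fun k hk => hD.lastIndexOfHeightLE_lt_succ (hkn hk),
    lastIndexOfHeightLE_le D m n, fun k hk => ?_⟩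
  rcases hk.lt_or_eq with hk | rfl
  · have hCk := hC.height_eq_index hn hk.le
    refine hX _ _ ?_ ?_ (hCk.trans (hD.height_lastIndexOfHeightLE (hkn hk)).symm)
    · refine hC.2.2 ▸ hC.1.critAnc hk (hCk ▸ ENat.natCast_lt_top k) ?_
      rw [hCk, hC.height_eq_index hn hk, Nat.cast_succ]
    · refine hD.2.2 ▸ hD.1.critAnc (hD.lastIndexOfHeightLE_lt (hkn hk)) ?_ ?_
      · exact (hD.height_lastIndexOfHeightLE (hkn hk)).trans_lt (ENat.natCast_lt_top k)
      · rw [hD.height_lastIndexOfHeightLE_succ (hkn hk), hD.height_lastIndexOfHeightLE (hkn hk)]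
  · rw [hD.lastIndexOfHeightLE_eq_of_height_eq hn, hC.2.2, hD.2.2]
    exact isotypic_refl X

lemma NormalVtx.phylogenetic {X : V} (hX : NormalVtx X) (hfin : height X < ⊤) :
    Phylogenetic X := by
  obtain ⟨n, C, hC, hn⟩ := exists_isFullEvol_height_eq hfin
  exact ⟨C, n, hC, fun _ _ hD => hX.embeds hC hn hD⟩

theorem stmt_8 (A B : V) (hAB : Anc A B) (hA : height A < ⊤) (hB : NormalVtx B) :
    Phylogenetic A ∧ Phylogenetic B :=
  ⟨(hB.of_anc hAB).phylogenetic hA, hB.phylogenetic (height_lt_top_of_anc hAB hA)⟩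
end

section
/- Let X be a phylogenetic vertex of a quiver and let A_0 ← A_1 ← ⋯ ← A_m = X be a short full evolution for X. Then every vertex A_k (k = 0, 1, ..., m) appearing in this evolution is phylogenetic. -/
universe u
variable {V : Type u} [Quiver V]

lemma evol_append (B A : ℕ → V) (n m k : ℕ) (hB : IsEvol B n) (hA : IsEvol A m)
    (hk : k ≤ m) (hend : B n = A k) :
    ∃ C : ℕ → V, IsEvol C (n + (m - k)) ∧ (∀ i ≤ n, C i = B i) ∧
      C (n + (m - k)) = A m := by
  refine ⟨fun i => if i < n then B i else A (i - n + k), ?_, ?_, ?_⟩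
  · intro j hj
    by_cases h1 : j + 1 < n
    · simp only [if_pos h1, if_pos (by omega : j < n)]
      exact hB j (by omega)
    · by_cases h2 : j < n
      · have hn : j + 1 = n := by omega
        simp only [if_neg h1, if_pos h2]
        have h3 : j + 1 - n + k = k := by omega
        rw [h3, ← hend, ← hn]
        exact hB j (by omega)
      · simp only [if_neg h1, if_neg h2]
        have h3 : j + 1 - n + k = (j - n + k) + 1 := by omega
        rw [h3]
        exact hA (j - n + k) (by omega)
  · intro i hi
    by_cases h : i < n
    · simp [h]
    · have hin : i = n := by omega
      rw [hin]
      show (if n < n then B n else A (n - n + k)) = B n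
      rw [if_neg (lt_irrefl n), show n - n + k = k by omega, ← hend]
  · have h : ¬ (n + (m - k) < n) := by omega
    simp only [if_neg h]
    congr 1
    omega

lemma anc_trans {X Y Z : V} (h1 : Anc X Y) (h2 : Anc Y Z) : Anc X Z := by
  obtain ⟨p, E, hE, hE0, hEp⟩ := h1
  obtain ⟨q, F, hF, hF0, hFq⟩ := h2
  obtain ⟨C, hC, hC0, hCend⟩ := evol_append E F p q 0 hE hF (Nat.zero_le q)
    (by rw [hEp, hF0])
  exact ⟨p + (q - 0), C, hC, by rw [hC0 0 (Nat.zero_le p), hE0], by rw [hCend, hFq]⟩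

lemma iso_symm {X Y : V} (h : Isotypic X Y) : Isotypic Y X := ⟨h.2, h.1⟩

lemma iso_trans {X Y Z : V} (h1 : Isotypic X Y) (h2 : Isotypic Y Z) : Isotypic X Z :=
  ⟨anc_trans h1.1 h2.1, anc_trans h2.2 h1.2⟩

lemma height_le_of_full {A : ℕ → V} {m : ℕ} {X : V} (h : IsFullEvol A m X) :
    height X ≤ (m : ℕ∞) :=
  sInf_le ⟨m, rfl, A, h⟩

lemma strict_mono_add {r : ℕ → ℕ} {m : ℕ} (h : ∀ k < m, r k < r (k + 1)) :
    ∀ d j, j + d ≤ m → r j + d ≤ r (j + d) := by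
  intro d
  induction d with
  | zero => simp
  | succ d ih =>
    intro j hj
    have h1 := ih j (by omega)
    have h2 := h (j + d) (by omega)
    have h3 : j + (d + 1) = (j + d) + 1 := by omega
    rw [h3]
    omega

theorem stmt_11 (X : V) (hX : Phylogenetic X) (A : ℕ → V) (m : ℕ)
    (hfull : IsFullEvol A m X) (hshort : (m : ℕ∞) = height X) :
    ∀ k ≤ m, Phylogenetic (A k) := by
  intro k hk
  obtain ⟨U, u, hUfull, hUuniv⟩ := hX
  -- the universal evolution has length m
  have hu_le_m : u ≤ m := (hUuniv A m hfull).1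
  have hm_le_u : (m : ℕ∞) ≤ (u : ℕ∞) := by
    rw [hshort]; exact height_le_of_full hUfull
  have hum : u = m := le_antisymm hu_le_m (by exact_mod_cast hm_le_u)
  subst hum
  -- U embeds in A via the identity, so U j ∼ A j
  obtain ⟨-, r, hr, hrm, hriso⟩ := hUuniv A u hfull
  have hrid : ∀ j ≤ u, r j = j := by
    intro j hj
    have h1 := strict_mono_add hr j 0 (by omega)
    rw [Nat.zero_add] at h1
    have h2 := strict_mono_add hr (u - j) j (by omega)
    have h3 : j + (u - j) = u := by omega
    rw [h3] at h2
    omega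
  have hUA : ∀ j ≤ u, Isotypic (U j) (A j) := by
    intro j hj
    have := hriso j hj
    rwa [hrid j hj] at this
  -- (A, k) is a universal evolution for A k
  refine ⟨A, k, ⟨⟨fun j hj => hfull.1 j (by omega), hfull.2.1, rfl⟩, ?_⟩⟩
  intro B n hB
  -- concatenate B with the tail of A to get a full evolution for X
  obtain ⟨C, hC, hCB, hCend⟩ := evol_append B A n u k hB.1 hfull.1 hk hB.2.2
  have hCfull : IsFullEvol C (n + (u - k)) X := by
    refine ⟨hC, ?_, by rw [hCend, hfull.2.2]⟩
    rw [hCB 0 (Nat.zero_le n)]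
    exact hB.2.1
  obtain ⟨hle, s, hs, hsend, hCiso⟩ := hUuniv C (n + (u - k)) hCfull
  have hsk_le : s k ≤ n := by
    have h2 := strict_mono_add hs (u - k) k (by omega)
    have h3 : k + (u - k) = u := by omega
    rw [h3] at h2
    omega
  have hk_le_n : k ≤ n := by
    have h1 := strict_mono_add hs k 0 (by omega)
    rw [Nat.zero_add] at h1
    omega
  refine ⟨hk_le_n, s, fun j hj => hs j (by omega), hsk_le, ?_⟩
  intro j hj
  have hsj : s j ≤ n := by
    have h2 := strict_mono_add hs (k - j) j (by omega)
    have h3 : j + (k - j) = k := by omega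
    rw [h3] at h2
    omega
  have hCeq : C (s j) = B (s j) := hCB (s j) hsj
  have h1 : Isotypic (A j) (U j) := iso_symm (hUA j (by omega))
  have h2 : Isotypic (U j) (C (s j)) := hCiso j (by omega)
  rw [hCeq] at h2
  exact iso_trans h1 h2
end
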